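/- arXiv:2303.02613 — 4 statements merged into one kernel-verified Lean document; each statement's English description precedes it below -/
import Mathlib

section
/- Let d_max ∈ (0,1), let X_min, X_max be reals with -1 < X_min < 0 < X_max, and let N be a positive integer. Let X(0),...,X(N-1) be any reals with X_min ≤ X(k) ≤ X_max and r_f(0),...,r_f(N-1) any reals with 0 ≤ r_f(k) ≤ X_max. Let V(0) > 0 and let u(0),...,u(N-1) be reals with V(k+1) = V(k) + u(k)·X(k) + (V(k) − u(k))·r_f(k). If for every k ≤ N−1 the investment satisfies −((M(k) + r_f(k))/(X_max − r_f(k)))·V(k) ≤ u(k) ≤ ((M(k) + r_f(k))/(|X_min| + r_f(k)))·V(k), where d(k) = (V_max(k) − V(k))/V_max(k), V_max(k) = max_{0≤i≤k} V(i), and M(k) = (d_max − d(k))/(1 − d(k)), then d(k) ≤ d_max for all 0 ≤ k ≤ N. -/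
/-- The running maximum `V_max(k) = max_{0 ≤ i ≤ k} V(i)` of the account value. -/
noncomputable def runMax (V : ℕ → ℝ) (k : ℕ) : ℝ :=
  (Finset.range (k + 1)).sup' (Finset.nonempty_range_iff.mpr k.succ_ne_zero) V

/-- The percentage drawdown `d(k) = (V_max(k) − V(k)) / V_max(k)`. -/
noncomputable def drawdown (V : ℕ → ℝ) (k : ℕ) : ℝ :=
  (runMax V k - V k) / runMax V k

/-- The modulation function `M(k) = (d_max − d(k)) / (1 − d(k))`. -/
noncomputable def modFn (dmax : ℝ) (V : ℕ → ℝ) (k : ℕ) : ℝ :=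
  (dmax - drawdown V k) / (1 - drawdown V k)

/-!
The drawdown bound `d(k) ≤ d_max` says exactly that `V(k)` stays above the floor
`(1 - d_max) · V_max(k)`. Since `M(k) · V(k) = V(k) - (1 - d_max) · V_max(k)`, the position
bounds are chosen so that the worst-case one-period loss relative to the riskless rate is at most
`(M(k) + r_f(k)) · V(k)`; hence `V(k+1) ≥ V(k) - M(k) · V(k)` lands on the floor, and the floor
only rises to `(1 - d_max) · V(k+1)` when a new maximum is set.
-/

lemma le_runMax (V : ℕ → ℝ) {i k : ℕ} (hik : i ≤ k) : V i ≤ runMax V k :=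
  Finset.le_sup' V (Finset.mem_range_succ_iff.mpr hik)

lemma runMax_zero (V : ℕ → ℝ) : runMax V 0 = V 0 := by
  simp [runMax]

lemma runMax_succ (V : ℕ → ℝ) (k : ℕ) :
    runMax V (k + 1) = max (V (k + 1)) (runMax V k) := by
  simp only [runMax, Finset.range_add_one]
  exact Finset.sup'_insert ..

lemma runMax_pos {V : ℕ → ℝ} (hV0 : 0 < V 0) (k : ℕ) : 0 < runMax V k :=
  hV0.trans_le (le_runMax V k.zero_le)

lemma drawdown_le_iff {V : ℕ → ℝ} {k : ℕ} (hR : 0 < runMax V k) (dmax : ℝ) :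
    drawdown V k ≤ dmax ↔ (1 - dmax) * runMax V k ≤ V k := by
  rw [drawdown, div_le_iff₀ hR]
  constructor <;> intro h <;> linarith

lemma modFn_mul_self {V : ℕ → ℝ} {k : ℕ} (hV : V k ≠ 0) (hR : runMax V k ≠ 0) (dmax : ℝ) :
    modFn dmax V k * V k = V k - (1 - dmax) * runMax V k := by
  have h1d : 1 - drawdown V k = V k / runMax V k := by
    rw [drawdown]; field_simp; ring
  rw [modFn, h1d, drawdown]
  field_simp
  ring

lemma runMax_succ_mul_le {V : ℕ → ℝ} {k : ℕ} {c : ℝ} (hc0 : 0 ≤ c) (hc1 : c ≤ 1)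
    (hV : 0 ≤ V (k + 1)) (h : c * runMax V k ≤ V (k + 1)) :
    c * runMax V (k + 1) ≤ V (k + 1) := by
  rw [runMax_succ, mul_max_of_nonneg _ _ hc0]
  exact max_le (mul_le_of_le_one_left hV hc1) h

/-- A long position loses at most `|x_min| + r` per unit against the riskless asset, a short one
at most `x_max - r`; the position bounds cap either loss at `(m + r) · v`. -/
lemma neg_mul_le_mul_sub_of_position_bounds {xmin xmax x r m v u : ℝ}
    (hxmin : xmin < 0) (hx : xmin ≤ x ∧ x ≤ xmax) (hr : 0 ≤ r ∧ r ≤ xmax)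
    (hu : -((m + r) / (xmax - r)) * v ≤ u ∧ u ≤ ((m + r) / (|xmin| + r)) * v) :
    -(m + r) * v ≤ u * (x - r) := by
  rcases le_or_gt 0 u with hlong | hshort
  · have hpos : 0 < |xmin| + r := by rw [abs_of_neg hxmin]; linarith [hr.1]
    have hcap : u * (|xmin| + r) ≤ (m + r) * v := by
      rw [← le_div_iff₀ hpos]
      simpa only [div_mul_eq_mul_div] using hu.2
    calc -(m + r) * v ≤ -(u * (|xmin| + r)) := by linarith
      _ = u * (xmin - r) := by rw [abs_of_neg hxmin]; ring
      _ ≤ u * (x - r) := mul_le_mul_of_nonneg_left (by linarith [hx.1]) hlong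
  · have hpos : 0 < xmax - r := by
      -- at `xmax = r` the lower bound degenerates to `0` (division by zero), excluding shorts
      refine sub_pos.mpr (hr.2.lt_of_ne fun heq => ?_)
      have := hu.1
      rw [heq, sub_self, div_zero, neg_zero, zero_mul] at this
      linarith
    have hcap : -(m + r) * v ≤ u * (xmax - r) := by
      rw [← div_le_iff₀ hpos, neg_mul, neg_div]
      simpa only [neg_mul, div_mul_eq_mul_div] using hu.1
    calc -(m + r) * v ≤ u * (xmax - r) := hcap
      _ ≤ u * (x - r) := mul_le_mul_of_nonpos_left (by linarith [hx.2]) hshort.le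

lemma floor_runMax_succ {dmax : ℝ} {V : ℕ → ℝ} {k : ℕ} {u x r : ℝ}
    (hdmax0 : 0 ≤ dmax) (hdmax1 : dmax < 1) (hV0 : 0 < V 0)
    (hfloor : (1 - dmax) * runMax V k ≤ V k)
    (hloss : -(modFn dmax V k + r) * V k ≤ u * (x - r))
    (hdyn : V (k + 1) = V k + u * x + (V k - u) * r) :
    (1 - dmax) * runMax V (k + 1) ≤ V (k + 1) := by
  have hR := runMax_pos hV0 k
  have hfloor_pos : 0 < (1 - dmax) * runMax V k := mul_pos (by linarith) hR
  have hVk : 0 < V k := hfloor_pos.trans_le hfloor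
  have hM := modFn_mul_self hVk.ne' hR.ne' dmax
  have hstep : (1 - dmax) * runMax V k ≤ V (k + 1) := by
    calc (1 - dmax) * runMax V k = V k * (1 + r) - (modFn dmax V k + r) * V k := by
          rw [add_mul, hM]; ring
      _ ≤ V k * (1 + r) + u * (x - r) := by linarith
      _ = V (k + 1) := by rw [hdyn]; ring
  exact runMax_succ_mul_le (by linarith) (by linarith) (hfloor_pos.le.trans hstep) hstep

theorem drawdown_modulation_sufficiency_general
    (dmax Xmin Xmax : ℝ)
    (hdmax0 : 0 < dmax) (hdmax1 : dmax < 1)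
    (hXmin0 : Xmin < 0)
    (N : ℕ)
    (X rf u V : ℕ → ℝ)
    (hX : ∀ k < N, Xmin ≤ X k ∧ X k ≤ Xmax)
    (hrf : ∀ k < N, 0 ≤ rf k ∧ rf k ≤ Xmax)
    (hV0 : 0 < V 0)
    (hdyn : ∀ k < N, V (k + 1) = V k + u k * X k + (V k - u k) * rf k)
    (hu : ∀ k < N,
      -((modFn dmax V k + rf k) / (Xmax - rf k)) * V k ≤ u k ∧
      u k ≤ ((modFn dmax V k + rf k) / (|Xmin| + rf k)) * V k) :
    ∀ k ≤ N, drawdown V k ≤ dmax := by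
  intro k hk
  rw [drawdown_le_iff (runMax_pos hV0 k)]
  induction k with
  | zero =>
    rw [runMax_zero]
    linarith [mul_pos hdmax0 hV0]
  | succ k ih =>
    exact floor_runMax_succ hdmax0.le hdmax1 hV0 (ih (by omega))
      (neg_mul_le_mul_sub_of_position_bounds hXmin0 (hX k hk) (hrf k hk) (hu k hk)) (hdyn k hk)

/-- sufficiency of the drawdown modulation bounds for the
drawdown guarantee `d(k) ≤ d_max` for all `0 ≤ k ≤ N`. -/
theorem drawdown_modulation_sufficiency
    (dmax Xmin Xmax : ℝ)
    (hdmax0 : 0 < dmax) (hdmax1 : dmax < 1)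
    (hXmin1 : -1 < Xmin) (hXmin0 : Xmin < 0) (hXmax : 0 < Xmax)
    (N : ℕ) (hN : 0 < N)
    (X rf u V : ℕ → ℝ)
    (hX : ∀ k < N, Xmin ≤ X k ∧ X k ≤ Xmax)
    (hrf : ∀ k < N, 0 ≤ rf k ∧ rf k ≤ Xmax)
    (hV0 : 0 < V 0)
    (hdyn : ∀ k < N, V (k + 1) = V k + u k * X k + (V k - u k) * rf k)
    (hu : ∀ k < N,
      -((modFn dmax V k + rf k) / (Xmax - rf k)) * V k ≤ u k ∧
      u k ≤ ((modFn dmax V k + rf k) / (|Xmin| + rf k)) * V k) :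
    ∀ k ≤ N, drawdown V k ≤ dmax :=
  drawdown_modulation_sufficiency_general dmax Xmin Xmax hdmax0 hdmax1 hXmin0 N X rf u V hX hrf hV0
    hdyn hu
end

section
/- Let d_max ∈ (0,1), let X_min, X_max be reals with -1 < X_min < 0 < X_max, and let r_f ∈ [0, X_max]. Suppose V > 0, V_max ≥ V, let d = (V_max − V)/V_max and assume d ≤ d_max, and let u ≥ 0. If the one-step updated value V' = V + u·X_min + (V − u)·r_f with unchanged running maximum V_max satisfies (V_max − V')/V_max ≤ d_max, then u ≤ ((M + r_f)/(|X_min| + r_f))·V, where M = (d_max − d)/(1 − d). -/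
/-! Since `1 - d = V / Vmax`, the budget `M · V` equals `dmax · Vmax - (Vmax - V)`, the loss the
account can still absorb before the drawdown reaches `dmax`. The worst-case one-step loss of a long
position `u` is `u · (|Xmin| + rf) - rf · V`, so keeping the drawdown within `dmax` forces
`u · (|Xmin| + rf) ≤ (M + rf) · V`. -/

theorem modulation_mul_eq {dmax V Vmax : ℝ} (hV : V ≠ 0) (hVmax : Vmax ≠ 0) :
    (dmax - (Vmax - V) / Vmax) / (1 - (Vmax - V) / Vmax) * V = dmax * Vmax - (Vmax - V) := by
  have hgap : 1 - (Vmax - V) / Vmax = V / Vmax := by field_simp; ring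
  rw [hgap]
  field_simp

theorem mul_sub_le_of_drawdown_le {dmax V Vmax u X rf : ℝ} (hVmax : 0 < Vmax)
    (h : (Vmax - (V + u * X + (V - u) * rf)) / Vmax ≤ dmax) :
    u * (rf - X) ≤ dmax * Vmax - (Vmax - V) + rf * V := by
  rw [div_le_iff₀ hVmax] at h
  linarith

theorem drawdown_modulation_necessity_long_general
    (dmax Xmin rf V Vmax u : ℝ)
    (hXmin0 : Xmin < 0)
    (hrf0 : 0 ≤ rf)
    (hV : 0 < V) (hVmax : V ≤ Vmax)
    (d : ℝ) (hd : d = (Vmax - V) / Vmax)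
    (V' : ℝ) (hV' : V' = V + u * Xmin + (V - u) * rf)
    (hnext : (Vmax - V') / Vmax ≤ dmax)
    (M : ℝ) (hM : M = (dmax - d) / (1 - d)) :
    u ≤ ((M + rf) / (|Xmin| + rf)) * V := by
  subst hd hV' hM
  have hVmax0 : 0 < Vmax := hV.trans_le hVmax
  have hbudget := modulation_mul_eq (dmax := dmax) hV.ne' hVmax0.ne'
  have hloss := mul_sub_le_of_drawdown_le hVmax0 hnext
  rw [abs_of_neg hXmin0, div_mul_eq_mul_div, le_div_iff₀ (by linarith)]
  linarith

/-- one-step necessity of the upper modulation bound for a long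
position `u ≥ 0`, under the worst-case return `X_min`. -/
theorem drawdown_modulation_necessity_long
    (dmax Xmin Xmax rf V Vmax u : ℝ)
    (hdmax0 : 0 < dmax) (hdmax1 : dmax < 1)
    (hXmin1 : -1 < Xmin) (hXmin0 : Xmin < 0) (hXmax : 0 < Xmax)
    (hrf0 : 0 ≤ rf) (hrf1 : rf ≤ Xmax)
    (hV : 0 < V) (hVmax : V ≤ Vmax)
    (d : ℝ) (hd : d = (Vmax - V) / Vmax) (hddmax : d ≤ dmax)
    (hu : 0 ≤ u)
    (V' : ℝ) (hV' : V' = V + u * Xmin + (V - u) * rf)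
    (hnext : (Vmax - V') / Vmax ≤ dmax)
    (M : ℝ) (hM : M = (dmax - d) / (1 - d)) :
    u ≤ ((M + rf) / (|Xmin| + rf)) * V :=
  drawdown_modulation_necessity_long_general dmax Xmin rf V Vmax u hXmin0 hrf0 hV hVmax d hd V' hV'
    hnext M hM
end

section
/- Let d_max ∈ (0,1), let X_min, X_max be reals with -1 < X_min < 0 < X_max, and let r_f ∈ [0, X_max) with r_f < X_max. Suppose V > 0, V_max ≥ V, let d = (V_max − V)/V_max and assume d ≤ d_max, and let u < 0. If the one-step updated value V' = V + u·X_max + (V − u)·r_f with unchanged running maximum V_max satisfies (V_max − V')/V_max ≤ d_max, then u ≥ −((M + r_f)/(X_max − r_f))·V, where M = (d_max − d)/(1 − d). -/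
/-!
Multiplying through by `V_max > 0`, the drawdown constraint on the next value reads
`V_max - V' ≤ d_max V_max`, and `M V = d_max V_max - (V_max - V)` is the part of the drawdown
budget still unused, measured in money. Since `V' - V = u (X - r_f) + V r_f`, the constraint says
exactly that the excess loss `-u (X - r_f)` of the position is covered by `M V + V r_f`; dividing
by `X - r_f > 0` gives the bound on `u`.
-/

namespace Drawdown

noncomputable section

def drawdown (Vmax V : ℝ) : ℝ := (Vmax - V) / Vmax

def modulation (dmax d : ℝ) : ℝ := (dmax - d) / (1 - d)

def nextValue (V u X rf : ℝ) : ℝ := V + u * X + (V - u) * rf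

end

variable {dmax X rf V Vmax u : ℝ}

lemma one_sub_drawdown (hVmax : Vmax ≠ 0) : 1 - drawdown Vmax V = V / Vmax := by
  rw [drawdown]
  field_simp
  ring

lemma modulation_drawdown_mul (hV : V ≠ 0) (hVmax : Vmax ≠ 0) :
    modulation dmax (drawdown Vmax V) * V = dmax * Vmax - (Vmax - V) := by
  rw [modulation, one_sub_drawdown hVmax, drawdown]
  field_simp

lemma nextValue_sub (V u X rf : ℝ) : nextValue V u X rf - V = u * (X - rf) + V * rf := by
  rw [nextValue]
  ring

lemma drawdown_le_iff (hVmax : 0 < Vmax) {V' : ℝ} :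
    drawdown Vmax V' ≤ dmax ↔ Vmax - V' ≤ dmax * Vmax := by
  rw [drawdown, div_le_iff₀ hVmax]

theorem drawdown_nextValue_le_iff (hV : 0 < V) (hVmax : V ≤ Vmax) (hrf : rf < X) :
    drawdown Vmax (nextValue V u X rf) ≤ dmax ↔
      -((modulation dmax (drawdown Vmax V) + rf) / (X - rf)) * V ≤ u := by
  have hVmax0 : 0 < Vmax := hV.trans_le hVmax
  have hXrf : 0 < X - rf := sub_pos.mpr hrf
  have hMV := modulation_drawdown_mul (dmax := dmax) hV.ne' hVmax0.ne'
  have hstep := nextValue_sub V u X rf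
  rw [drawdown_le_iff hVmax0, neg_mul, neg_le, div_mul_eq_mul_div, le_div_iff₀ hXrf]
  constructor <;> intro h <;> linarith

end Drawdown

theorem drawdown_modulation_necessity_short_general
    (dmax Xmax rf V Vmax u : ℝ)
    (hrf1 : rf < Xmax)
    (hV : 0 < V) (hVmax : V ≤ Vmax)
    (d : ℝ) (hd : d = (Vmax - V) / Vmax)
    (V' : ℝ) (hV' : V' = V + u * Xmax + (V - u) * rf)
    (hnext : (Vmax - V') / Vmax ≤ dmax)
    (M : ℝ) (hM : M = (dmax - d) / (1 - d)) :
    -((M + rf) / (Xmax - rf)) * V ≤ u := by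
  subst hd hM hV'
  exact (Drawdown.drawdown_nextValue_le_iff hV hVmax hrf1).mp hnext

/-- one-step necessity of the lower modulation bound for a short
position `u < 0`, under the worst-case return `X_max`. -/
theorem drawdown_modulation_necessity_short
    (dmax Xmin Xmax rf V Vmax u : ℝ)
    (hdmax0 : 0 < dmax) (hdmax1 : dmax < 1)
    (hXmin1 : -1 < Xmin) (hXmin0 : Xmin < 0) (hXmax : 0 < Xmax)
    (hrf0 : 0 ≤ rf) (hrf1 : rf < Xmax)
    (hV : 0 < V) (hVmax : V ≤ Vmax)
    (d : ℝ) (hd : d = (Vmax - V) / Vmax) (hddmax : d ≤ dmax)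
    (hu : u < 0)
    (V' : ℝ) (hV' : V' = V + u * Xmax + (V - u) * rf)
    (hnext : (Vmax - V') / Vmax ≤ dmax)
    (M : ℝ) (hM : M = (dmax - d) / (1 - d)) :
    -((M + rf) / (Xmax - rf)) * V ≤ u :=
  drawdown_modulation_necessity_short_general dmax Xmax rf V Vmax u hrf1 hV hVmax d hd V' hV' hnext
    M hM
end

section
/- Let d_max ∈ (0,1), X_min, X_max reals with -1 < X_min < 0 < X_max, and r_f ∈ [0, X_max]. Suppose V > 0, V_max ≥ V, d = (V_max − V)/V_max ≤ d_max, M = (d_max − d)/(1 − d), and u satisfies −((M + r_f)/(X_max − r_f))·V ≤ u ≤ ((M + r_f)/(|X_min| + r_f))·V. Then for every X ∈ [X_min, X_max], the updated value V' = V + u·X + (V − u)·r_f satisfies (V_max − V')/V_max ≤ d + M·(1 − d) = d_max; in particular, if the running maximum is unchanged (V' ≤ V_max), the new drawdown is at most d_max. -/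
/-!
Writing the update as `V' = V * (1 + r_f) + u * (X - r_f)` and using `d * V_max = V_max - V`,
`M * (1 - d) * V_max = M * V`, the claim reduces to the bound `-(M + r_f) * V ≤ u * (X - r_f)`
on the excess gain. That gain is affine in `X`, so it is smallest at `X_max` when `u ≤ 0` and at
`X_min` when `0 ≤ u`; the two bounds on `u` are exactly what makes it at least `-(M + r_f) * V`
at these endpoints.
-/

theorem neg_le_mul_sub_of_mem_Icc {K u X rf Xmin Xmax : ℝ} (hX : X ∈ Set.Icc Xmin Xmax)
    (hlo : -K ≤ u * (Xmax - rf)) (hhi : u * (|Xmin| + rf) ≤ K) : -K ≤ u * (X - rf) := by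
  rcases le_total 0 u with hu | hu
  · nlinarith [neg_abs_le Xmin, mul_le_mul_of_nonneg_left hX.1 hu]
  · nlinarith [mul_le_mul_of_nonpos_left hX.2 hu]

theorem neg_le_mul_of_neg_div_le {a b u : ℝ} (ha : 0 ≤ a) (hb : 0 ≤ b) (h : -(a / b) ≤ u) :
    -a ≤ u * b := by
  have := mul_le_of_le_div₀ ha hb (neg_le.mp h)
  linarith

theorem drawdown_modulation_one_step_sufficiency_general
    (dmax Xmin Xmax rf V Vmax u : ℝ)
    (hrf0 : 0 ≤ rf) (hrf1 : rf ≤ Xmax)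
    (hV : 0 < V) (hVmax : V ≤ Vmax)
    (d : ℝ) (hd : d = (Vmax - V) / Vmax) (hddmax : d ≤ dmax)
    (M : ℝ) (hM : M = (dmax - d) / (1 - d))
    (hu_lo : -((M + rf) / (Xmax - rf)) * V ≤ u)
    (hu_hi : u ≤ ((M + rf) / (|Xmin| + rf)) * V) :
    ∀ X : ℝ, Xmin ≤ X → X ≤ Xmax →
      (Vmax - (V + u * X + (V - u) * rf)) / Vmax ≤ d + M * (1 - d) ∧
      d + M * (1 - d) = dmax := by
  intro X hX1 hX2
  have hVmax0 : 0 < Vmax := hV.trans_le hVmax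
  have hdV : d * Vmax = Vmax - V := by rw [hd, div_mul_cancel₀ _ hVmax0.ne']
  have h1d : 0 < 1 - d := by
    rw [hd, one_sub_div hVmax0.ne', sub_sub_cancel]
    exact div_pos hV hVmax0
  have hMd : M * (1 - d) = dmax - d := hM ▸ div_mul_cancel₀ _ h1d.ne'
  have hK : 0 ≤ (M + rf) * V :=
    mul_nonneg (add_nonneg (hM ▸ div_nonneg (sub_nonneg.2 hddmax) h1d.le) hrf0) hV.le
  have hlo : -((M + rf) * V) ≤ u * (Xmax - rf) :=
    neg_le_mul_of_neg_div_le hK (sub_nonneg.2 hrf1) (by rwa [mul_div_right_comm, ← neg_mul])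
  have hhi : u * (|Xmin| + rf) ≤ (M + rf) * V :=
    mul_le_of_le_div₀ hK (by positivity) (by rwa [mul_div_right_comm])
  have hgain := neg_le_mul_sub_of_mem_Icc ⟨hX1, hX2⟩ hlo hhi
  refine ⟨?_, by rw [hMd]; ring⟩
  rw [div_le_iff₀ hVmax0]
  linear_combination hgain + (M - 1) * hdV

/-- one-step sufficiency of the modulation bounds: under any
realizable return `X ∈ [X_min, X_max]`, the next-step drawdown (with running
maximum `V_max` unchanged) is at most `d + M·(1 − d) = d_max`. -/
theorem drawdown_modulation_one_step_sufficiency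
    (dmax Xmin Xmax rf V Vmax u : ℝ)
    (hdmax0 : 0 < dmax) (hdmax1 : dmax < 1)
    (hXmin1 : -1 < Xmin) (hXmin0 : Xmin < 0) (hXmax : 0 < Xmax)
    (hrf0 : 0 ≤ rf) (hrf1 : rf ≤ Xmax)
    (hV : 0 < V) (hVmax : V ≤ Vmax)
    (d : ℝ) (hd : d = (Vmax - V) / Vmax) (hddmax : d ≤ dmax)
    (M : ℝ) (hM : M = (dmax - d) / (1 - d))
    (hu_lo : -((M + rf) / (Xmax - rf)) * V ≤ u)
    (hu_hi : u ≤ ((M + rf) / (|Xmin| + rf)) * V) :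
    ∀ X : ℝ, Xmin ≤ X → X ≤ Xmax →
      (Vmax - (V + u * X + (V - u) * rf)) / Vmax ≤ d + M * (1 - d) ∧
      d + M * (1 - d) = dmax :=
  drawdown_modulation_one_step_sufficiency_general dmax Xmin Xmax rf V Vmax u hrf0 hrf1 hV hVmax d
    hd hddmax M hM hu_lo hu_hi
end
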